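/- Let α < 0, let R = R₂ − R₁ with 0 < R₁ < R₂. Then the first Robin eigenvalue of the disjoint union (−R₂,−R₁) ∪ (R₁,R₂) ⊂ ℝ is strictly smaller than the first Robin eigenvalue of the interval (−R,R): λ₁^α((R₁,R₂)) < λ₁^α((−R,R)). -/

import Mathlib

/-!
Ground-state substitution. For `k > 0`, `w x = k tanh (k (x - c))` solves the Riccati equation
`w' = k² - w²`, so integrating `(u' - w u)² ≥ 0` by parts gives, on `(a, b)` with midpoint `c`,
`∫ u'² + α (u(a)² + u(b)²) ≥ -k² ∫ u²` as soon as `w(b) = -w(a) = -α`, i.e.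
`k tanh (k (b - a) / 2) = -α`; equality holds for `u = cosh (k (x - c))`. Hence
`λ₁^α((a, b)) = -k²` with `k` the positive root of that equation, and since `k tanh (k L)` is
increasing in both `k` and `L`, the root shrinks as the half-length `L` grows: the interval
`(-R, R)` has half-length `R > R / 2`, the half-length of `(R₁, R₂)`.
-/

open MeasureTheory intervalIntegral

/-- The first Robin eigenvalue of the interval `(a,b)` with boundary parameter `α`. -/
noncomputable def lam1Int (α a b : ℝ) : ℝ :=
  sInf { q : ℝ | ∃ u : ℝ → ℝ, ContDiff ℝ 1 u ∧ (∫ x in a..b, (u x) ^ 2) ≠ 0 ∧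
    q = ((∫ x in a..b, (deriv u x) ^ 2) + α * ((u a) ^ 2 + (u b) ^ 2)) /
        (∫ x in a..b, (u x) ^ 2) }

namespace Real

theorem hasDerivAt_tanh (x : ℝ) : HasDerivAt tanh (1 - tanh x ^ 2) x := by
  have h := (hasDerivAt_sinh x).div (hasDerivAt_cosh x) (cosh_pos x).ne'
  rw [show sinh / cosh = tanh from funext fun y => (tanh_eq_sinh_div_cosh y).symm] at h
  refine h.congr_deriv ?_
  rw [tanh_eq_sinh_div_cosh]
  field_simp

@[fun_prop]
theorem continuous_tanh : Continuous tanh :=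
  continuous_iff_continuousAt.2 fun x => (hasDerivAt_tanh x).continuousAt

theorem strictMono_tanh : StrictMono tanh :=
  strictMono_of_hasDerivAt_pos hasDerivAt_tanh fun x => by linarith [tanh_sq_lt_one x]

theorem tanh_pos {x : ℝ} (hx : 0 < x) : 0 < tanh x := by
  simpa using strictMono_tanh hx

end Real

open Real

theorem exists_pos_mul_tanh_mul_eq {L β : ℝ} (hL : 0 < L) (hβ : 0 < β) :
    ∃ k, 0 < k ∧ k * tanh (k * L) = β := by
  set g : ℝ → ℝ := fun k => k * tanh (k * L)
  have hg : Continuous g := by fun_prop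
  set k₀ := max 1 (β / tanh L)
  have hk₀ : 1 ≤ k₀ := le_max_left _ _
  have hβk₀ : β ≤ g k₀ := calc
    β = β / tanh L * tanh L := (div_mul_cancel₀ _ (tanh_pos hL).ne').symm
    _ ≤ k₀ * tanh L := by gcongr; exacts [(tanh_pos hL).le, le_max_right _ _]
    _ ≤ k₀ * tanh (k₀ * L) := by
        gcongr
        exact strictMono_tanh.monotone (le_mul_of_one_le_left hL.le hk₀)
  obtain ⟨k, ⟨hk0, -⟩, hk⟩ := intermediate_value_Icc (zero_le_one.trans hk₀) hg.continuousOn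
    ⟨by simp [g, hβ.le], hβk₀⟩
  refine ⟨k, hk0.lt_of_ne ?_, hk⟩
  rintro rfl
  simp [g, hβ.ne] at hk

theorem lt_of_mul_tanh_mul_eq {k k' L L' : ℝ} (hk : 0 < k) (hk' : 0 < k') (hL : 0 < L)
    (hLL' : L < L') (h : k * tanh (k * L) = k' * tanh (k' * L')) : k' < k := by
  by_contra! hle
  have : k * tanh (k * L) < k' * tanh (k' * L') := calc
    k * tanh (k * L) ≤ k' * tanh (k * L) := by gcongr; exact (tanh_pos (by positivity)).le
    _ ≤ k' * tanh (k' * L) := by gcongr; exact strictMono_tanh.monotone (by gcongr)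
    _ < k' * tanh (k' * L') := by gcongr; exact strictMono_tanh (by gcongr)
  exact this.ne h

theorem integral_deriv_sub_mul_sq {u w w' : ℝ → ℝ} (hu : ContDiff ℝ 1 u)
    (hw : ∀ x, HasDerivAt w (w' x) x) (hw' : Continuous w') (a b : ℝ) :
    ∫ x in a..b, (deriv u x - w x * u x) ^ 2 =
      (∫ x in a..b, deriv u x ^ 2) + (∫ x in a..b, (w' x + w x ^ 2) * u x ^ 2)
        - (w b * u b ^ 2 - w a * u a ^ 2) := by
  have hu₀ : Continuous u := hu.continuous
  have hu₁ : Continuous (deriv u) := hu.continuous_deriv le_rfl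
  have hw₀ : Continuous w := continuous_iff_continuousAt.2 fun x => (hw x).continuousAt
  have hFTC : ∫ x in a..b, (w' x * u x ^ 2 + w x * (2 * u x * deriv u x)) =
      w b * u b ^ 2 - w a * u a ^ 2 := by
    refine integral_eq_sub_of_hasDerivAt (f := fun x => w x * u x ^ 2) (fun x _ => ?_)
      ((by fun_prop : Continuous fun x =>
        w' x * u x ^ 2 + w x * (2 * u x * deriv u x)).intervalIntegrable a b)
    have hux := (hu.differentiable one_ne_zero x).hasDerivAt
    exact (hw x).mul ((hux.pow 2).congr_deriv (by ring))
  have hi : ∀ f : ℝ → ℝ, Continuous f → IntervalIntegrable f volume a b :=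
    fun f hf => hf.intervalIntegrable a b
  rw [← hFTC, ← integral_add (hi _ (by fun_prop)) (hi _ (by fun_prop)),
    ← integral_sub (hi _ (by fun_prop)) (hi _ (by fun_prop))]
  congr 1 with x
  ring

noncomputable def robinEnergy (α a b : ℝ) (u : ℝ → ℝ) : ℝ :=
  (∫ x in a..b, deriv u x ^ 2) + α * (u a ^ 2 + u b ^ 2)

def robinQuotients (α a b : ℝ) : Set ℝ :=
  { q | ∃ u : ℝ → ℝ, ContDiff ℝ 1 u ∧ (∫ x in a..b, u x ^ 2) ≠ 0 ∧
    q = robinEnergy α a b u / ∫ x in a..b, u x ^ 2 }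

section RobinGroundState

variable {α a b k : ℝ} {u : ℝ → ℝ}

theorem hasDerivAt_mul_tanh (k c x : ℝ) :
    HasDerivAt (fun y => k * tanh (k * (y - c))) (k ^ 2 - (k * tanh (k * (x - c))) ^ 2) x := by
  have h := ((hasDerivAt_tanh _).comp x (((hasDerivAt_id' x).sub_const c).const_mul k)).const_mul k
  exact h.congr_deriv (by ring)

theorem robinEnergy_add_eq_integral (hu : ContDiff ℝ 1 u)
    (hroot : k * tanh (k * ((b - a) / 2)) = -α) :
    robinEnergy α a b u + k ^ 2 * ∫ x in a..b, u x ^ 2 =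
      ∫ x in a..b, (deriv u x - k * tanh (k * (x - (a + b) / 2)) * u x) ^ 2 := by
  have hb : k * tanh (k * (b - (a + b) / 2)) = -α := by rw [← hroot]; ring_nf
  have ha : k * tanh (k * (a - (a + b) / 2)) = α := by
    rw [show k * (a - (a + b) / 2) = -(k * ((b - a) / 2)) by ring, tanh_neg, mul_neg, hroot,
      neg_neg]
  rw [integral_deriv_sub_mul_sq hu (hasDerivAt_mul_tanh k _) (by fun_prop), hb, ha]
  simp only [sub_add_cancel, intervalIntegral.integral_const_mul, robinEnergy]
  ring

theorem neg_sq_mul_integral_le_robinEnergy (hab : a ≤ b) (hu : ContDiff ℝ 1 u)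
    (hroot : k * tanh (k * ((b - a) / 2)) = -α) :
    -k ^ 2 * ∫ x in a..b, u x ^ 2 ≤ robinEnergy α a b u := by
  have hsq : 0 ≤ ∫ x in a..b, (deriv u x - k * tanh (k * (x - (a + b) / 2)) * u x) ^ 2 :=
    integral_nonneg hab fun x _ => sq_nonneg _
  linarith [robinEnergy_add_eq_integral hu hroot]

theorem deriv_cosh_mul_sub (k c x : ℝ) :
    deriv (fun y => cosh (k * (y - c))) x = k * tanh (k * (x - c)) * cosh (k * (x - c)) := by
  have h : HasDerivAt (fun y => cosh (k * (y - c))) (sinh (k * (x - c)) * (k * 1)) x :=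
    (hasDerivAt_cosh _).comp x (((hasDerivAt_id' x).sub_const c).const_mul k)
  rw [h.deriv, tanh_eq_sinh_div_cosh]
  field_simp [(cosh_pos (k * (x - c))).ne']

theorem robinEnergy_cosh (hroot : k * tanh (k * ((b - a) / 2)) = -α) :
    robinEnergy α a b (fun x => cosh (k * (x - (a + b) / 2))) =
      -k ^ 2 * ∫ x in a..b, cosh (k * (x - (a + b) / 2)) ^ 2 := by
  have h := robinEnergy_add_eq_integral (u := fun x => cosh (k * (x - (a + b) / 2)))
    (by fun_prop) hroot
  simp only [deriv_cosh_mul_sub, sub_self, zero_pow two_ne_zero,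
    intervalIntegral.integral_zero] at h
  linarith

theorem isLeast_robinQuotients (hab : a < b) (hroot : k * tanh (k * ((b - a) / 2)) = -α) :
    IsLeast (robinQuotients α a b) (-k ^ 2) := by
  have hpos : 0 < ∫ x in a..b, cosh (k * (x - (a + b) / 2)) ^ 2 :=
    intervalIntegral_pos_of_pos_on ((by fun_prop : Continuous fun x =>
      cosh (k * (x - (a + b) / 2)) ^ 2).intervalIntegrable a b) (fun x _ => by positivity) hab
  refine ⟨⟨fun x => cosh (k * (x - (a + b) / 2)), by fun_prop, hpos.ne', ?_⟩, ?_⟩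
  · rw [robinEnergy_cosh hroot, mul_div_cancel_right₀ _ hpos.ne']
  · rintro q ⟨u, hu, hne, rfl⟩
    have hpos : 0 < ∫ x in a..b, u x ^ 2 :=
      (integral_nonneg hab.le fun x _ => sq_nonneg (u x)).lt_of_ne' hne
    rw [le_div_iff₀ hpos]
    exact neg_sq_mul_integral_le_robinEnergy hab.le hu hroot

theorem lam1Int_eq_neg_sq (hab : a < b) (hroot : k * tanh (k * ((b - a) / 2)) = -α) :
    lam1Int α a b = -k ^ 2 :=
  (isLeast_robinQuotients hab hroot).csInf_eq

end RobinGroundState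

theorem lam1_union_lt_interval_general (α R₁ R₂ : ℝ) (hα : α < 0) (h₁₂ : R₁ < R₂) :
    lam1Int α R₁ R₂ < lam1Int α (-(R₂ - R₁)) (R₂ - R₁) := by
  have hR : 0 < R₂ - R₁ := sub_pos.2 h₁₂
  obtain ⟨k, hk, hroot⟩ := exists_pos_mul_tanh_mul_eq hR (neg_pos.2 hα)
  obtain ⟨k', hk', hroot'⟩ := exists_pos_mul_tanh_mul_eq (half_pos hR) (neg_pos.2 hα)
  have hkk' : k < k' := lt_of_mul_tanh_mul_eq hk' hk (half_pos hR) (half_lt_self hR)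
    (hroot'.trans hroot.symm)
  have hroot₂ : k * tanh (k * ((R₂ - R₁ - -(R₂ - R₁)) / 2)) = -α := by
    rwa [sub_neg_eq_add, add_self_div_two]
  rw [lam1Int_eq_neg_sq h₁₂ hroot', lam1Int_eq_neg_sq (neg_lt_self hR) hroot₂]
  exact neg_lt_neg (pow_lt_pow_left₀ hkk' hk.le two_ne_zero)

/-- For `α < 0` and `0 < R₁ < R₂`, the first Robin eigenvalue of the disjoint union
`(−R₂,−R₁) ∪ (R₁,R₂)`, which equals `λ₁^α((R₁,R₂))`, is strictly smaller than that of
the interval `(−R,R)` with `R = R₂ − R₁`. -/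
theorem lam1_union_lt_interval (α R₁ R₂ : ℝ) (hα : α < 0) (h₁ : 0 < R₁) (h₁₂ : R₁ < R₂) :
    lam1Int α R₁ R₂ < lam1Int α (-(R₂ - R₁)) (R₂ - R₁) :=
  lam1_union_lt_interval_general α R₁ R₂ hα h₁₂
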